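/- arXiv:1702.05985 — 3 statements merged into one kernel-verified Lean document; each statement's English description precedes it below -/
import Mathlib

section
/- Classical Fano's inequality for a partition: let N ≥ 2, let P₁,…,P_N be probability measures on a common measurable space (Ω, F), let A₁,…,A_N be pairwise disjoint events whose union is Ω, and let Q be any probability measure on (Ω, F) such that all KL(Pᵢ, Q) are finite. Then (1/N)·Σᵢ Pᵢ(Aᵢ) ≤ ((1/N)·Σᵢ KL(Pᵢ, Q) + log 2) / log N. -/
/-!
Apply the Donsker–Varadhan inequality `∫ f dP - log ∫ exp f dQ ≤ KL(P, Q)` to `Pᵢ, Q` with the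
test function `f = log N · 1_{Aᵢ}`: it gives `Pᵢ(Aᵢ) log N - log (1 + (N - 1) Q(Aᵢ)) ≤ KL(Pᵢ, Q)`.
Bounding the logarithm by its tangent line at `2` and summing over `i`, the disjointness of the
`Aᵢ` (through `∑ Q(Aᵢ) ≤ 1`) leaves `log N · ∑ Pᵢ(Aᵢ) ≤ ∑ KL(Pᵢ, Q) + N log 2`.
-/

open MeasureTheory
open scoped ENNReal Classical

/-- The Kullback-Leibler divergence between two measures, with value `+∞`
when `P` is not absolutely continuous w.r.t. `Q` or when the log-likelihood
ratio is not integrable. -/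
noncomputable def KLdiv {Ω : Type*} [MeasurableSpace Ω] (P Q : Measure Ω) : ℝ≥0∞ :=
  if P ≪ Q ∧ Integrable (fun ω => Real.log (P.rnDeriv Q ω).toReal) P
  then ENNReal.ofReal (∫ ω, Real.log (P.rnDeriv Q ω).toReal ∂P)
  else ⊤

open Real InformationTheory

lemma log_le_log_two_add_half_sub_one {x : ℝ} (hx : 0 < x) : log x ≤ log 2 + x / 2 - 1 := by
  have := log_le_sub_one_of_pos (half_pos hx)
  rw [log_div hx.ne' two_ne_zero] at this
  linarith

section

variable {Ω : Type*} [MeasurableSpace Ω] {μ ν : Measure Ω}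
  [IsProbabilityMeasure μ] [IsProbabilityMeasure ν]

lemma KLdiv_eq_klDiv : KLdiv μ ν = klDiv μ ν := by
  rw [KLdiv, klDiv_def]
  simp only [probReal_univ, add_sub_cancel_right]
  rfl

/-- The Donsker–Varadhan inequality: Gibbs' inequality for `μ` against the tilted measure
`ν.tilted f`. -/
lemma integral_sub_log_integral_exp_le_toReal_klDiv (hμν : klDiv μ ν ≠ ∞) {f : Ω → ℝ}
    (hfμ : Integrable f μ) (hfν : Integrable (fun x ↦ exp (f x)) ν) :
    ∫ x, f x ∂μ - log (∫ x, exp (f x) ∂ν) ≤ (klDiv μ ν).toReal := by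
  obtain ⟨hac, hllr⟩ := klDiv_ne_top_iff.mp hμν
  have : IsProbabilityMeasure (ν.tilted f) := isProbabilityMeasure_tilted hfν
  have hgibbs := integral_llr_add_sub_measure_univ_nonneg
    (hac.trans (absolutelyContinuous_tilted hfν)) (integrable_llr_tilted_right hac hfμ hllr hfν)
  rw [integral_llr_tilted_right hac hfμ hfν hllr] at hgibbs
  rw [toReal_klDiv_of_measure_eq hac (by simp)]
  simp only [probReal_univ] at hgibbs
  linarith

lemma log_mul_measureReal_sub_log_le_toReal_klDiv (hμν : klDiv μ ν ≠ ∞) {A : Set Ω}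
    (hA : MeasurableSet A) {t : ℝ} (ht : 0 < t) :
    log t * μ.real A - log (1 + (t - 1) * ν.real A) ≤ (klDiv μ ν).toReal := by
  have hexp : (fun x ↦ exp (A.indicator (fun _ ↦ log t) x)) =
      fun x ↦ A.indicator (fun _ ↦ t - 1) x + 1 := by
    ext x
    by_cases hx : x ∈ A <;> simp [hx, exp_log ht]
  have hexp_int : Integrable (fun x ↦ exp (A.indicator (fun _ ↦ log t) x)) ν := by
    rw [hexp]
    exact ((integrable_const _).indicator hA).add (integrable_const _)
  have h := integral_sub_log_integral_exp_le_toReal_klDiv hμν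
    ((integrable_const (log t)).indicator hA) hexp_int
  rw [hexp, integral_add ((integrable_const _).indicator hA) (integrable_const _),
    integral_indicator_const _ hA, integral_indicator_const _ hA] at h
  simpa [mul_comm, add_comm] using h

lemma log_mul_measureReal_le_toReal_klDiv_add (hμν : klDiv μ ν ≠ ∞) {A : Set Ω}
    (hA : MeasurableSet A) {t : ℝ} (ht : 1 ≤ t) :
    log t * μ.real A ≤ (klDiv μ ν).toReal + log 2 + (t - 1) / 2 * ν.real A - 1 / 2 := by
  have hpos : 0 < 1 + (t - 1) * ν.real A := by
    nlinarith [measureReal_nonneg (μ := ν) (s := A)]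
  linarith [log_mul_measureReal_sub_log_le_toReal_klDiv hμν hA (by linarith : 0 < t),
    log_le_log_two_add_half_sub_one hpos]

end

theorem fano_partition_general {Ω : Type*} [MeasurableSpace Ω] (N : ℕ) (hN : 2 ≤ N)
    (P : Fin N → Measure Ω) [∀ i, IsProbabilityMeasure (P i)]
    (Q : Measure Ω) [IsProbabilityMeasure Q]
    (A : Fin N → Set Ω) (hA : ∀ i, MeasurableSet (A i))
    (hdisj : Pairwise (Function.onFun Disjoint A))
    (hKL : ∀ i, KLdiv (P i) Q ≠ ⊤) :
    (1 / N : ℝ) * ∑ i, (P i (A i)).toReal ≤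
      ((1 / N : ℝ) * ∑ i, (KLdiv (P i) Q).toReal + Real.log 2) / Real.log N := by
  have hN' : (2 : ℝ) ≤ N := by exact_mod_cast hN
  have hterm : ∀ i, log N * (P i).real (A i)
      ≤ (KLdiv (P i) Q).toReal + log 2 + (N - 1) / 2 * Q.real (A i) - 1 / 2 := fun i ↦ by
    have hKLi := hKL i
    rw [KLdiv_eq_klDiv] at hKLi ⊢
    exact log_mul_measureReal_le_toReal_klDiv_add hKLi (hA i) (by linarith)
  have hsum := Finset.sum_le_sum fun i (_ : i ∈ Finset.univ) ↦ hterm i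
  simp only [Finset.sum_add_distrib, Finset.sum_sub_distrib, ← Finset.mul_sum,
    Finset.sum_const, Finset.card_univ, Fintype.card_fin, nsmul_eq_mul] at hsum
  have hQ : (N - 1) / 2 * ∑ i, Q.real (A i) ≤ (N - 1) / 2 := by
    rw [← measureReal_iUnion_fintype hdisj hA]
    exact mul_le_of_le_one_right (by linarith) measureReal_le_one
  have hkey : log N * ∑ i, (P i (A i)).toReal ≤ ∑ i, (KLdiv (P i) Q).toReal + N * log 2 := by
    simp only [measureReal_def] at hsum hQ
    linarith
  rw [le_div_iff₀ (log_pos (by linarith)), one_div,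
    ← mul_le_mul_iff_of_pos_left (by positivity : (0 : ℝ) < N)]
  field_simp
  linarith

/-- Classical Fano's inequality, for events forming a partition. -/
theorem fano_partition {Ω : Type*} [MeasurableSpace Ω] (N : ℕ) (hN : 2 ≤ N)
    (P : Fin N → Measure Ω) [∀ i, IsProbabilityMeasure (P i)]
    (Q : Measure Ω) [IsProbabilityMeasure Q]
    (A : Fin N → Set Ω) (hA : ∀ i, MeasurableSet (A i))
    (hdisj : Pairwise (Function.onFun Disjoint A))
    (hcover : (⋃ i, A i) = Set.univ)
    (hKL : ∀ i, KLdiv (P i) Q ≠ ⊤) :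
    (1 / N : ℝ) * ∑ i, (P i (A i)).toReal ≤
      ((1 / N : ℝ) * ∑ i, (KLdiv (P i) Q).toReal + Real.log 2) / Real.log N :=
  fano_partition_general N hN P Q A hA hdisj hKL
end

section
/- Refined Pinsker's inequality for general distributions: let P and Q be probability measures on a common measurable space (Ω, F) with KL(P,Q) finite. Then for every event A ∈ F with Q(A) ∈ (0,1), |P(A) − Q(A)| ≤ sqrt( KL(P,Q) / φ(Q(A)) ), where φ(q) = log((1−q)/q)/(1 − 2q) for q ≠ 1/2 and φ(1/2) = 2. -/
open MeasureTheory
open scoped ENNReal Classical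

/-- The optimal factor in the refined Pinsker inequality of
Ordentlich and Weinberger: `φ(q) = log((1−q)/q)/(1−2q)`, extended by
continuity as `φ(1/2) = 2`. -/
noncomputable def pinskerPhi (q : ℝ) : ℝ :=
  if q = 1 / 2 then 2 else Real.log ((1 - q) / q) / (1 - 2 * q)

/-!
By the data processing inequality for the map `ω ↦ (ω ∈ A)`, `KL(P,Q)` dominates the binary
divergence `kl(p,q)` of `p = P(A)` and `q = Q(A)`, so it suffices to show that the gap
`G(p) = kl(p,q) - φ(q) (p - q)²` is nonnegative on `[0,1]`. The value of `φ(q)` is exactly what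
makes `G(1 - p) = G(p)`; together with `kl(1-p,1-q) = kl(p,q)` and `φ(1-q) = φ(q)` this reduces
to `p, q ≤ 1/2`. There `G'` vanishes at `q` and at `1/2`, and it is concave because
`G'' = 1/(p(1-p)) - 2φ(q)` decreases on `(0,1/2]`. Hence `G' ≤ 0` on `(0,q]` and `G' ≥ 0` on
`[q,1/2]`, so `G` is minimal at `q`, where it vanishes.
-/

open Real InformationTheory Set

lemma KLdiv_eq_klDiv_s14 {Ω : Type*} [MeasurableSpace Ω] {P Q : Measure Ω}
    [IsFiniteMeasure P] [IsFiniteMeasure Q] (h_univ : P univ = Q univ) :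
    KLdiv P Q = klDiv P Q := by
  unfold KLdiv
  split_ifs with h
  · rw [klDiv_of_ac_of_integrable h.1 h.2]
    simp [measureReal_def, h_univ, llr_def]
  · exact (klDiv_eq_top_iff.2 fun hac hint => h ⟨hac, hint⟩).symm

lemma toReal_klDiv_eq_sum {α : Type*} [MeasurableSpace α] [MeasurableSingletonClass α]
    [Fintype α] {μ ν : Measure α} [IsFiniteMeasure μ] [IsFiniteMeasure ν] (hμν : μ ≪ ν)
    (h_univ : μ univ = ν univ) :
    (klDiv μ ν).toReal = ∑ x, μ.real {x} * log (μ.real {x} / ν.real {x}) := by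
  rw [toReal_klDiv_of_measure_eq hμν h_univ, integral_fintype .of_finite]
  refine Finset.sum_congr rfl fun x _ => ?_
  rcases eq_or_ne (μ {x}) 0 with hμx | hμx
  · simp [measureReal_def, hμx]
  have hνx : ν {x} ≠ 0 := fun h => hμx (hμν h)
  have hrn : μ.rnDeriv ν x = μ {x} / ν {x} := by
    rw [← Measure.setLIntegral_rnDeriv hμν, lintegral_singleton,
      ENNReal.mul_div_cancel_right hνx (measure_ne_top _ _)]
  simp only [smul_eq_mul, llr_def, hrn, ENNReal.toReal_div, measureReal_def]

noncomputable def binaryKL (p q : ℝ) : ℝ := p * log (p / q) + (1 - p) * log ((1 - p) / (1 - q))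

lemma toReal_klDiv_map_mem {Ω : Type*} [MeasurableSpace Ω] {P Q : Measure Ω}
    [IsProbabilityMeasure P] [IsProbabilityMeasure Q] (hPQ : P ≪ Q) {A : Set Ω}
    (hA : MeasurableSet A) :
    (klDiv (P.map (· ∈ A)) (Q.map (· ∈ A))).toReal = binaryKL (P A).toReal (Q A).toReal := by
  have hmeas : Measurable (· ∈ A) := hA.mem
  rw [toReal_klDiv_eq_sum (hPQ.map hmeas) (by simp [Measure.map_apply hmeas]), Fintype.sum_Prop]
  have hcompl (μ : Measure Ω) [IsProbabilityMeasure μ] : (μ Aᶜ).toReal = 1 - (μ A).toReal :=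
    probReal_compl_eq_one_sub hA
  simp only [Measure.real, Measure.map_apply hmeas (measurableSet_singleton _), preimage,
    mem_singleton_iff, eq_iff_iff, iff_true, iff_false, ofPred_mem_eq, ← compl_def, hcompl,
    binaryKL]

section BinaryKL

variable {p q : ℝ}

lemma binaryKL_eq (hq₀ : q ≠ 0) (hq₁ : 1 - q ≠ 0) :
    binaryKL p q = p * log p + (1 - p) * log (1 - p) - p * log q - (1 - p) * log (1 - q) := by
  have mul_log_div (a b : ℝ) (hb : b ≠ 0) : a * log (a / b) = a * log a - a * log b := by
    rcases eq_or_ne a 0 with rfl | ha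
    · simp
    · rw [log_div ha hb]; ring
  rw [binaryKL, mul_log_div p q hq₀, mul_log_div (1 - p) (1 - q) hq₁]
  ring

lemma binaryKL_one_sub_one_sub : binaryKL (1 - p) (1 - q) = binaryKL p q := by
  simp only [binaryKL, sub_sub_cancel]
  ring

lemma binaryKL_one_sub_left (hq₀ : q ≠ 0) (hq₁ : 1 - q ≠ 0) :
    binaryKL (1 - p) q = binaryKL p q - (2 * p - 1) * log ((1 - q) / q) := by
  rw [binaryKL_eq hq₀ hq₁, binaryKL_eq hq₀ hq₁, log_div hq₁ hq₀, sub_sub_cancel]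
  ring

end BinaryKL

lemma pinskerPhi_mul_one_sub_two_mul (q : ℝ) :
    pinskerPhi q * (1 - 2 * q) = log ((1 - q) / q) := by
  unfold pinskerPhi
  split_ifs with h
  · subst h; norm_num
  · exact div_mul_cancel₀ _ (by contrapose! h; linarith)

lemma pinskerPhi_one_sub (q : ℝ) : pinskerPhi (1 - q) = pinskerPhi q := by
  unfold pinskerPhi
  by_cases h : q = 1 / 2
  · subst h; norm_num
  rw [if_neg (by contrapose! h; linarith), if_neg h, sub_sub_cancel, ← inv_div (1 - q) q, log_inv,
    show 1 - 2 * (1 - q) = -(1 - 2 * q) by ring, neg_div_neg_eq]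

lemma pinskerPhi_pos {q : ℝ} (hq : q ∈ Ioo 0 1) : 0 < pinskerPhi q := by
  obtain ⟨hq₀, hq₁⟩ := hq
  rcases lt_trichotomy q (1 / 2) with h | rfl | h
  · rw [pinskerPhi, if_neg h.ne]
    exact div_pos (log_pos ((one_lt_div hq₀).2 (by linarith))) (by linarith)
  · norm_num [pinskerPhi]
  · rw [pinskerPhi, if_neg h.ne']
    exact div_pos_of_neg_of_neg
      (log_neg (div_pos (by linarith) hq₀) ((div_lt_one hq₀).2 (by linarith))) (by linarith)

noncomputable def pinskerGap (q p : ℝ) : ℝ := binaryKL p q - pinskerPhi q * (p - q) ^ 2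

noncomputable def pinskerGapDeriv (q p : ℝ) : ℝ :=
  log p - log (1 - p) - (log q - log (1 - q)) - 2 * pinskerPhi q * (p - q)

section PinskerGap

variable {p q x : ℝ}

lemma pinskerGap_one_sub_one_sub : pinskerGap (1 - q) (1 - p) = pinskerGap q p := by
  rw [pinskerGap, pinskerGap, binaryKL_one_sub_one_sub, pinskerPhi_one_sub]
  ring

lemma pinskerGap_one_sub_right (hq₀ : q ≠ 0) (hq₁ : 1 - q ≠ 0) :
    pinskerGap q (1 - p) = pinskerGap q p := by
  rw [pinskerGap, pinskerGap, binaryKL_one_sub_left hq₀ hq₁, ← pinskerPhi_mul_one_sub_two_mul]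
  ring

lemma pinskerGap_self (hq₀ : q ≠ 0) (hq₁ : 1 - q ≠ 0) : pinskerGap q q = 0 := by
  simp [pinskerGap, binaryKL, hq₀, hq₁]

lemma pinskerGap_eq (hq₀ : q ≠ 0) (hq₁ : 1 - q ≠ 0) :
    pinskerGap q = fun p => p * log p + (1 - p) * log (1 - p) - p * log q
      - (1 - p) * log (1 - q) - pinskerPhi q * (p - q) ^ 2 :=
  funext fun _ => by rw [pinskerGap, binaryKL_eq hq₀ hq₁]

lemma continuous_pinskerGap (hq₀ : q ≠ 0) (hq₁ : 1 - q ≠ 0) : Continuous (pinskerGap q) := by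
  have h₁ : Continuous fun p : ℝ => (1 - p) * log (1 - p) :=
    continuous_mul_log.comp (continuous_const.sub continuous_id)
  have h₀ : Continuous fun p : ℝ => p * log p := continuous_mul_log
  rw [pinskerGap_eq hq₀ hq₁]
  fun_prop

lemma hasDerivAt_pinskerGap (hq₀ : q ≠ 0) (hq₁ : 1 - q ≠ 0) (hp : p ∈ Ioo 0 1) :
    HasDerivAt (pinskerGap q) (pinskerGapDeriv q p) p := by
  have hp₁ : 1 - p ≠ 0 := by linarith [hp.2]
  have hid := hasDerivAt_id' p
  have h₁ := hasDerivAt_mul_log hp.1.ne'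
  have h₂ := (hasDerivAt_mul_log hp₁).comp p (hid.const_sub 1)
  have h₃ := ((hid.sub_const q).pow 2).const_mul (pinskerPhi q)
  rw [pinskerGap_eq hq₀ hq₁]
  refine ((((h₁.add h₂).sub (hid.mul_const (log q))).sub
    ((hid.const_sub 1).mul_const (log (1 - q)))).sub h₃).congr_deriv ?_
  unfold pinskerGapDeriv
  ring

lemma hasDerivAt_pinskerGapDeriv (hp : p ∈ Ioo 0 1) :
    HasDerivAt (pinskerGapDeriv q) (p⁻¹ + (1 - p)⁻¹ - 2 * pinskerPhi q) p := by
  have hid := hasDerivAt_id' p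
  have h₁ := hasDerivAt_log hp.1.ne'
  have h₂ := (hid.const_sub 1).log (by linarith [hp.2])
  have h₃ := (hid.sub_const q).const_mul (2 * pinskerPhi q)
  refine (((h₁.sub h₂).sub_const (log q - log (1 - q))).sub h₃).congr_deriv ?_
  field_simp
  ring

lemma continuousOn_pinskerGapDeriv : ContinuousOn (pinskerGapDeriv q) (Ioo 0 1) :=
  fun _ hx => (hasDerivAt_pinskerGapDeriv hx).continuousAt.continuousWithinAt

lemma concaveOn_pinskerGapDeriv : ConcaveOn ℝ (Ioc 0 (1 / 2)) (pinskerGapDeriv q) := by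
  have hsub : Ioc (0 : ℝ) (1 / 2) ⊆ Ioo 0 1 := fun x hx => ⟨hx.1, by linarith [hx.2]⟩
  refine AntitoneOn.concaveOn_of_deriv (convex_Ioc 0 _) (continuousOn_pinskerGapDeriv.mono hsub)
    ?_ ?_ <;> rw [interior_Ioc]
  · exact fun x hx => (hasDerivAt_pinskerGapDeriv
      (hsub (Ioo_subset_Ioc_self hx))).differentiableAt.differentiableWithinAt
  intro x hx y hy hxy
  rw [(hasDerivAt_pinskerGapDeriv (hsub (Ioo_subset_Ioc_self hx))).deriv,
    (hasDerivAt_pinskerGapDeriv (hsub (Ioo_subset_Ioc_self hy))).deriv]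
  have hsum (z : ℝ) (hz : z ∈ Ioo (0 : ℝ) (1 / 2)) : z⁻¹ + (1 - z)⁻¹ = (z * (1 - z))⁻¹ := by
    have : 1 - z ≠ 0 := by linarith [hz.2]
    field_simp [hz.1.ne']
    ring
  have hprod : x * (1 - x) ≤ y * (1 - y) := by nlinarith [hx.2, hy.2]
  rw [hsum x hx, hsum y hy]
  linarith [inv_anti₀ (mul_pos hx.1 (by linarith [hx.2])) hprod]

lemma pinskerGapDeriv_self : pinskerGapDeriv q q = 0 := by
  simp [pinskerGapDeriv]

lemma pinskerGapDeriv_half (hq₀ : q ≠ 0) (hq₁ : 1 - q ≠ 0) : pinskerGapDeriv q (1 / 2) = 0 := by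
  have h := pinskerPhi_mul_one_sub_two_mul q
  rw [log_div hq₁ hq₀] at h
  norm_num [pinskerGapDeriv]
  linarith

lemma pinskerGapDeriv_nonneg (hq : q ∈ Ioc 0 (1 / 2)) (hx : x ∈ Icc q (1 / 2)) :
    0 ≤ pinskerGapDeriv q x := by
  have h := (concaveOn_pinskerGapDeriv (q := q)).min_le_of_mem_Icc hq ⟨by norm_num, le_rfl⟩ hx
  rwa [pinskerGapDeriv_self, pinskerGapDeriv_half hq.1.ne' (by linarith [hq.2]), min_self] at h

lemma pinskerGapDeriv_nonpos (hq : q ∈ Ioc 0 (1 / 2)) (hx : x ∈ Ioc 0 q) :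
    pinskerGapDeriv q x ≤ 0 := by
  rcases hq.2.lt_or_eq with hq₂ | rfl
  · have hq₁ : 1 - q ≠ 0 := by linarith
    have h := (concaveOn_pinskerGapDeriv (q := q)).left_le_of_le_right'' ⟨hx.1, hx.2.trans hq.2⟩
      ⟨by norm_num, le_rfl⟩ hx.2 hq₂
      (by rw [pinskerGapDeriv_self, pinskerGapDeriv_half hq.1.ne' hq₁])
    rwa [pinskerGapDeriv_self] at h
  -- The two zeros of the concave function coincide, but `φ(1/2) = 2` makes it monotone.
  · have hphi : pinskerPhi (1 / 2) = 2 := if_pos rfl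
    have hmono : MonotoneOn (pinskerGapDeriv (1 / 2)) (Ioc 0 (1 / 2)) := by
      have hsub : Ioc (0 : ℝ) (1 / 2) ⊆ Ioo 0 1 := fun x hx => ⟨hx.1, by linarith [hx.2]⟩
      refine monotoneOn_of_hasDerivWithinAt_nonneg (convex_Ioc 0 _)
        (continuousOn_pinskerGapDeriv.mono hsub)
        (fun y hy => (hasDerivAt_pinskerGapDeriv (hsub (interior_subset hy))).hasDerivWithinAt)
        fun y hy => ?_
      rw [interior_Ioc] at hy
      obtain ⟨hy₀, hy₁⟩ := hy
      have : 0 < 1 - y := by linarith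
      rw [hphi, inv_eq_one_div, inv_eq_one_div, div_add_div _ _ hy₀.ne' this.ne', sub_nonneg,
        le_div_iff₀ (by positivity)]
      nlinarith [sq_nonneg (1 - 2 * y)]
    have h := hmono hx ⟨by norm_num, le_rfl⟩ hx.2
    rwa [pinskerGapDeriv_self] at h

lemma pinskerGap_nonneg_of_le_half (hq : q ∈ Ioc 0 (1 / 2)) (hp : p ∈ Icc 0 (1 / 2)) :
    0 ≤ pinskerGap q p := by
  have hq₀ : q ≠ 0 := hq.1.ne'
  have hq₁ : 1 - q ≠ 0 := by linarith [hq.2]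
  have hderiv {a b : ℝ} (ha : 0 ≤ a) (hb : b ≤ 1 / 2) (x : ℝ) (hx : x ∈ interior (Icc a b)) :
      HasDerivWithinAt (pinskerGap q) (pinskerGapDeriv q x) (interior (Icc a b)) x := by
    rw [interior_Icc] at hx
    exact (hasDerivAt_pinskerGap hq₀ hq₁ ⟨by linarith [hx.1], by linarith [hx.2]⟩).hasDerivWithinAt
  rw [← pinskerGap_self hq₀ hq₁]
  rcases le_total p q with hpq | hqp
  · refine antitoneOn_of_hasDerivWithinAt_nonpos (convex_Icc 0 q)
      (continuous_pinskerGap hq₀ hq₁).continuousOn (hderiv le_rfl hq.2) (fun x hx => ?_)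
      ⟨hp.1, hpq⟩ ⟨hq.1.le, le_rfl⟩ hpq
    rw [interior_Icc] at hx
    exact pinskerGapDeriv_nonpos hq ⟨hx.1, hx.2.le⟩
  · refine monotoneOn_of_hasDerivWithinAt_nonneg (convex_Icc q (1 / 2))
      (continuous_pinskerGap hq₀ hq₁).continuousOn (hderiv hq.1.le le_rfl) (fun x hx => ?_)
      ⟨le_rfl, hq.2⟩ ⟨hqp, hp.2⟩ hqp
    rw [interior_Icc] at hx
    exact pinskerGapDeriv_nonneg hq ⟨hx.1.le, hx.2.le⟩

lemma pinskerGap_nonneg (hq : q ∈ Ioo 0 1) (hp : p ∈ Icc 0 1) : 0 ≤ pinskerGap q p := by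
  wlog hq₂ : q ≤ 1 / 2 generalizing p q
  · rw [← pinskerGap_one_sub_one_sub]
    exact this ⟨by linarith [hq.2], by linarith [hq.1]⟩ ⟨by linarith [hp.2], by linarith [hp.1]⟩
      (by linarith)
  wlog hp₂ : p ≤ 1 / 2 generalizing p
  · rw [← pinskerGap_one_sub_right hq.1.ne' (by linarith [hq.2])]
    exact this ⟨by linarith [hp.2], by linarith [hp.1]⟩ (by linarith)
  exact pinskerGap_nonneg_of_le_half ⟨hq.1, hq₂⟩ ⟨hp.1, hp₂⟩

end PinskerGap

/-- Refined Pinsker's inequality for general distributions: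
`|P(A) − Q(A)| ≤ sqrt(KL(P,Q)/φ(Q(A)))` for every event `A` with `Q(A) ∈ (0,1)`. -/
theorem refined_pinsker {Ω : Type*} [MeasurableSpace Ω]
    (P Q : Measure Ω) [IsProbabilityMeasure P] [IsProbabilityMeasure Q]
    (hKL : KLdiv P Q ≠ ⊤)
    (A : Set Ω) (hA : MeasurableSet A) (hQA : (Q A).toReal ∈ Set.Ioo (0 : ℝ) 1) :
    |(P A).toReal - (Q A).toReal| ≤
      Real.sqrt ((KLdiv P Q).toReal / pinskerPhi ((Q A).toReal)) := by
  rw [KLdiv_eq_klDiv_s14 (by simp)] at hKL ⊢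
  have hPA : (P A).toReal ∈ Icc 0 1 := ⟨ENNReal.toReal_nonneg, measureReal_le_one⟩
  have hPQ : P ≪ Q := (klDiv_ne_top_iff.1 hKL).1
  have hbound : pinskerPhi (Q A).toReal * ((P A).toReal - (Q A).toReal) ^ 2 ≤ (klDiv P Q).toReal :=
    calc _ ≤ binaryKL (P A).toReal (Q A).toReal := sub_nonneg.1 (pinskerGap_nonneg hQA hPA)
      _ = (klDiv (P.map (· ∈ A)) (Q.map (· ∈ A))).toReal := (toReal_klDiv_map_mem hPQ hA).symm
      _ ≤ (klDiv P Q).toReal := ENNReal.toReal_mono hKL (klDiv_map_le P Q hA.mem)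
  rw [← sqrt_sq_eq_abs]
  exact sqrt_le_sqrt ((le_div_iff₀' (pinskerPhi_pos hQA)).2 hbound)
end

section
/- Improved Bretagnolle–Huber inequality for Bernoulli distributions: for all p, q ∈ [0,1], 1 − |p − q| ≥ exp(−1/e) · exp(−kl(p,q)), with the convention exp(−∞) = 0 when kl(p,q) = +∞. -/
open scoped ENNReal Classical

/-- The Kullback-Leibler divergence between Bernoulli distributions of
parameters `p` and `q`, as a real number (recall `Real.log 0 = 0` in Mathlib,
which realizes the conventions `0·log 0 = 0` and `0·log(0/0) = 0`). -/
noncomputable def klBin (p q : ℝ) : ℝ :=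
  p * Real.log (p / q) + (1 - p) * Real.log ((1 - p) / (1 - q))

/-- The Kullback-Leibler divergence between Bernoulli distributions of
parameters `p` and `q`, with values in `[0,+∞]`: it is `+∞` exactly when
`q ∈ {0,1}` and `p ≠ q`. -/
noncomputable def klBinE (p q : ℝ) : ℝ≥0∞ :=
  if (q = 0 ∧ p ≠ 0) ∨ (q = 1 ∧ p ≠ 1) then ⊤ else ENNReal.ofReal (klBin p q)

/-- `x log x ≥ -1/e`. -/
lemma xlogx_ge (x : ℝ) (hx : 0 ≤ x) : -(1 / Real.exp 1) ≤ x * Real.log x := by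
  rcases eq_or_lt_of_le hx with h | h
  · simp [← h]
    positivity
  · -- log (1/x) ≤ (1/x)/e, i.e. u ≤ exp (u / e)
    have hu : 0 < 1 / x := by positivity
    have key : Real.log (1 / x) ≤ (1 / x) / Real.exp 1 := by
      rw [Real.log_le_iff_le_exp hu]
      have h1 := Real.add_one_le_exp ((1 / x) / Real.exp 1 - 1)
      have h2 : Real.exp ((1 / x) / Real.exp 1 - 1) * Real.exp 1
          = Real.exp ((1 / x) / Real.exp 1) := by
        rw [← Real.exp_add]; ring_nf
      have h3 : (1 / x / Real.exp 1 - 1 + 1) * Real.exp 1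
          ≤ Real.exp (1 / x / Real.exp 1 - 1) * Real.exp 1 :=
        mul_le_mul_of_nonneg_right h1 (Real.exp_pos 1).le
      have h4 : (1 / x / Real.exp 1 - 1 + 1) * Real.exp 1 = 1 / x := by
        field_simp
        ring
      rw [h2, h4] at h3
      exact h3
    have hlog : Real.log (1 / x) = -Real.log x := by
      rw [one_div, Real.log_inv]
    rw [hlog] at key
    have := mul_le_mul_of_nonneg_left key hx
    have hx' : x ≠ 0 := ne_of_gt h
    calc -(1 / Real.exp 1) = -(x * ((1 / x) / Real.exp 1)) := by
          field_simp
      _ ≤ -(x * -Real.log x) := by linarith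
      _ = x * Real.log x := by ring

/-- `a log (a/b) ≥ a - b` for `a ≥ 0`, `b > 0`. -/
lemma mul_log_div_ge {a b : ℝ} (ha : 0 ≤ a) (hb : 0 < b) : a - b ≤ a * Real.log (a / b) := by
  rcases eq_or_lt_of_le ha with h | h
  · simp [← h]; linarith
  · have h1 : Real.log (b / a) ≤ b / a - 1 := Real.log_le_sub_one_of_pos (by positivity)
    have h2 : Real.log (a / b) = -Real.log (b / a) := by
      rw [← Real.log_inv]; congr 1; field_simp
    rw [h2]
    have := mul_le_mul_of_nonneg_left h1 ha
    have : a * (b / a) = b := by field_simp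
    nlinarith
  
lemma klBin_nonneg {p q : ℝ} (hp0 : 0 ≤ p) (hp1 : p ≤ 1) (hq0 : 0 < q) (hq1 : q < 1) :
    0 ≤ klBin p q := by
  have h1 := mul_log_div_ge hp0 hq0
  have h2 := mul_log_div_ge (by linarith : (0:ℝ) ≤ 1 - p) (by linarith : (0:ℝ) < 1 - q)
  unfold klBin; linarith

lemma klBin_symm (p q : ℝ) : klBin (1 - p) (1 - q) = klBin p q := by
  unfold klBin
  rw [sub_sub_cancel, sub_sub_cancel]
  ring

/-- Key inequality: for `0 ≤ p ≤ q < 1`, `kl(p,q) + log(1 - (q - p)) ≥ -1/e`. -/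
lemma key_ineq {p q : ℝ} (hp0 : 0 ≤ p) (hpq : p ≤ q) (hq0 : 0 < q) (hq1 : q < 1) :
    -(1 / Real.exp 1) ≤ klBin p q + Real.log (1 - (q - p)) := by
  set a : ℝ := 1 - p with ha_def
  set b : ℝ := 1 - q with hb_def
  have ha : 0 < a := by simp only [ha_def]; linarith
  have hb : 0 < b := by simp only [hb_def]; linarith
  have hba : b ≤ a := by simp only [ha_def, hb_def]; linarith
  have ha1 : a ≤ 1 := by simp only [ha_def]; linarith
  have hs : (1 : ℝ) - (q - p) = b + (1 - a) * 1 := by simp only [ha_def, hb_def]; ring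
  -- AM-GM: (b/a)^a ≤ a * (b/a) + (1-a) * 1 = b + (1-a)
  have amgm : (b / a) ^ a * 1 ^ (1 - a) ≤ a * (b / a) + (1 - a) * 1 :=
    Real.geom_mean_le_arith_mean2_weighted (le_of_lt ha) (by linarith)
      (by positivity) zero_le_one (by ring)
  have hab : a * (b / a) = b := by field_simp
  have hpow : (0:ℝ) < (b / a) ^ a := Real.rpow_pos_of_pos (by positivity) a
  have hlog1 : Real.log ((b / a) ^ a) ≤ Real.log (1 - (q - p)) := by
    apply Real.log_le_log hpow
    have h5 := amgm
    rw [Real.one_rpow, mul_one, hab] at h5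
    linarith [hs]
  have hlog2 : Real.log ((b / a) ^ a) = a * (Real.log b - Real.log a) := by
    rw [Real.log_rpow (by positivity), Real.log_div (ne_of_gt hb) (ne_of_gt ha)]
  -- so  a * (log a - log b) + log (1 - (q-p)) ≥ 0
  have hmain : 0 ≤ a * (Real.log a - Real.log b) + Real.log (1 - (q - p)) := by
    rw [hlog2] at hlog1; linarith
  -- klBin p q = p log p - p log q + a (log a - log b)
  have hsplit2 : (1 - p) * Real.log ((1 - p) / (1 - q)) = a * (Real.log a - Real.log b) := by
    rw [Real.log_div (ne_of_gt (by linarith : (0:ℝ) < 1 - p))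
      (ne_of_gt (by linarith : (0:ℝ) < 1 - q))]
  have hsplit1 : p * Real.log p - p * Real.log q ≤ p * Real.log (p / q) := by
    rcases eq_or_lt_of_le hp0 with h | h
    · simp [← h]
    · rw [Real.log_div (ne_of_gt h) (ne_of_gt hq0), mul_sub]
  have hlq : p * Real.log q ≤ 0 :=
    mul_nonpos_of_nonneg_of_nonpos hp0 (Real.log_nonpos hq0.le hq1.le)
  have hx := xlogx_ge p hp0
  unfold klBin
  linarith

/-- Improved Bretagnolle–Huber inequality for Bernoulli distributions:
`1 − |p − q| ≥ exp(−1/e)·exp(−kl(p,q))`, with the convention `exp(−∞) = 0`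
(encoded by the `if`) when `kl(p,q) = +∞`. -/
theorem improved_bretagnolle_huber_bernoulli (p q : ℝ)
    (hp : p ∈ Set.Icc (0 : ℝ) 1) (hq : q ∈ Set.Icc (0 : ℝ) 1) :
    1 - |p - q| ≥
      Real.exp (-(1 / Real.exp 1)) *
        (if klBinE p q = ⊤ then 0 else Real.exp (-(klBinE p q).toReal)) := by
  obtain ⟨hp0, hp1⟩ := hp
  obtain ⟨hq0, hq1⟩ := hq
  have habs : |p - q| ≤ 1 := by
    rw [abs_sub_le_iff]; constructor <;> linarith
  by_cases htop : klBinE p q = ⊤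
  · rw [if_pos htop, mul_zero]
    linarith
  · rw [if_neg htop]
    unfold klBinE at htop
    by_cases hc : (q = 0 ∧ p ≠ 0) ∨ (q = 1 ∧ p ≠ 1)
    · exact absurd (if_pos hc) htop
    · push_neg at hc
      obtain ⟨hc0, hc1⟩ := hc
      have hkle : klBinE p q = ENNReal.ofReal (klBin p q) := by
        unfold klBinE
        rw [if_neg]
        push_neg
        exact ⟨hc0, hc1⟩
      rcases eq_or_lt_of_le hq0 with hq0' | hq0'
      · -- q = 0, hence p = 0
        have hq' : q = 0 := hq0'.symm
        have hp' : p = 0 := hc0 hq'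
        subst hq' hp'
        have : klBin 0 0 = 0 := by simp [klBin]
        rw [hkle, this]
        simp only [ENNReal.ofReal_zero, ENNReal.toReal_zero, neg_zero, Real.exp_zero, mul_one,
          sub_zero, abs_zero, ge_iff_le]
        exact Real.exp_le_one_iff.2 (neg_nonpos.2 (by positivity))
      rcases eq_or_lt_of_le hq1 with hq1' | hq1'
      · -- q = 1, hence p = 1
        have hp' : p = 1 := hc1 hq1'
        subst hq1' hp'
        have : klBin 1 1 = 0 := by simp [klBin]
        rw [hkle, this]
        simp only [ENNReal.ofReal_zero, ENNReal.toReal_zero, neg_zero, Real.exp_zero, mul_one,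
          sub_self, abs_zero, sub_zero, ge_iff_le]
        exact Real.exp_le_one_iff.2 (neg_nonpos.2 (by positivity))
      -- main case 0 < q < 1
      have hnn : 0 ≤ klBin p q := klBin_nonneg hp0 hp1 hq0' hq1'
      rw [hkle, ENNReal.toReal_ofReal hnn, ← Real.exp_add]
      have hlt : |p - q| < 1 := by
        rw [abs_sub_lt_iff]; constructor <;> linarith
      have hpos : (0:ℝ) < 1 - |p - q| := by linarith
      rw [ge_iff_le, ← Real.le_log_iff_exp_le hpos]
      rcases le_total p q with hle | hle
      · have habs2 : |p - q| = q - p := by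
          rw [abs_sub_comm, abs_of_nonneg (by linarith)]
        rw [habs2]
        have := key_ineq hp0 hle hq0' hq1'
        linarith
      · have habs2 : |p - q| = p - q := abs_of_nonneg (by linarith)
        rw [habs2]
        have hk := key_ineq (by linarith : (0:ℝ) ≤ 1 - p) (by linarith : 1 - p ≤ 1 - q)
          (by linarith : (0:ℝ) < 1 - q) (by linarith : 1 - q < 1)
        rw [klBin_symm] at hk
        have harg : (1:ℝ) - (1 - q - (1 - p)) = 1 - (p - q) := by ring
        rw [harg] at hk
        linarith
end
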